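/- arXiv:2309.00566 — 7 statements merged into one kernel-verified Lean document; each statement's English description precedes it below -/
import Mathlib

section
/- Let φ : ℂ → ℂ be an entire function whose Taylor expansion at 0 is φ(z) = Σ_{n=0}^∞ aₙ zⁿ for all z ∈ ℂ. Then ∫_ℂ |φ(z)|² e^{−|z|²} dA(z) = π · Σ_{n=0}^∞ n! |aₙ|², where both sides are interpreted in [0,∞] (either both are infinite or both are finite and equal). -/
/-!
In polar coordinates `z = r e^{iθ}` the integral splits into radial and angular parts. On each
circle, `θ ↦ φ(r e^{iθ})` has the absolutely summable Fourier series `∑ aₙ rⁿ e^{inθ}`, so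
Parseval's identity gives `∫_{-π}^{π} |φ(r e^{iθ})|² dθ = 2π ∑ |aₙ|² r^{2n}`. Monotone
convergence then lets us integrate term by term against `r e^{-r²} dr`, and
`∫₀^∞ r^{2n+1} e^{-r²} dr = n!/2` is a Gamma integral.
-/

open MeasureTheory Real Set AddCircle
open scoped ENNReal

theorem summable_norm_mul_pow_of_forall_summable {𝕜 : Type*} [RCLike 𝕜] {a : ℕ → 𝕜}
    (h : ∀ z : 𝕜, Summable fun n => a n * z ^ n) (w : 𝕜) :
    Summable fun n => ‖a n * w ^ n‖ := by
  set p := FormalMultilinearSeries.ofScalars 𝕜 a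
  have hp : p.radius = ∞ := ENNReal.eq_top_of_forall_nnreal_le fun r =>
    p.le_radius_of_tendsto (l := 0) <| by
      simpa [p, FormalMultilinearSeries.ofScalars_norm] using (h (r : ℝ)).tendsto_atTop_zero.norm
  simpa [p, FormalMultilinearSeries.ofScalars_norm] using
    p.summable_norm_mul_pow (r := ‖w‖₊) (hp ▸ ENNReal.coe_lt_top)

theorem AddCircle.hasSum_sq_norm_of_hasSum_fourier {T : ℝ} [Fact (0 < T)] {c : ℤ → ℂ}
    (hc : Summable fun n => ‖c n‖) {f : AddCircle T → ℂ}
    (hf : ∀ x, HasSum (fun n => c n * fourier n x) (f x)) :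
    HasSum (fun n => ‖c n‖ ^ 2) (∫ x, ‖f x‖ ^ 2 ∂haarAddCircle) := by
  obtain ⟨G, hG⟩ : Summable fun n => c n • fourier (T := T) n :=
    .of_norm (by simpa [norm_smul, fourier_norm] using hc)
  have hGf : ⇑G = f := funext fun x =>
    ((ContinuousMap.evalCLM ℂ x).hasSum hG).unique (by simpa using hf x)
  have hL2 : HasSum (fun n => c n • fourierBasis (T := T) n)
      (ContinuousMap.toLp 2 haarAddCircle ℂ G) := by
    simpa [coe_fourierBasis, fourierLp] using (ContinuousMap.toLp 2 haarAddCircle ℂ).hasSum hG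
  have hcoeff (m : ℤ) : fourierCoeff G m = c m := by
    have hrepr (n : ℤ) :
        fourierBasis.repr (c n • fourierBasis (T := T) n) m = if n = m then c m else 0 := by
      rw [map_smul, HilbertBasis.repr_self]
      by_cases hn : n = m <;> simp [hn, lp.single_apply]
    rw [← fourierCoeff_toLp, ← fourierBasis_repr]
    refine (((lp.evalCLM ℂ (fun _ : ℤ => ℂ) 2 m).comp
      fourierBasis.repr.toContinuousLinearEquiv.toContinuousLinearMap).hasSum hL2).unique ?_
    simpa only [ContinuousLinearMap.comp_apply, ContinuousLinearEquiv.coe_coe,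
      LinearIsometryEquiv.coe_toContinuousLinearEquiv, lp.evalCLM, LinearMap.mkContinuous_apply,
      lp.evalₗ_apply, hrepr] using hasSum_ite_eq m (c m)
  have hParseval := hasSum_sq_fourierCoeff (ContinuousMap.toLp 2 haarAddCircle ℂ G)
  simp only [fourierCoeff_toLp, hcoeff] at hParseval
  convert hParseval using 1
  refine integral_congr_ae ?_
  filter_upwards [ContinuousMap.coeFn_toLp (p := 2) (μ := haarAddCircle) (𝕜 := ℂ) G] with x hx
  rw [hx, hGf]

theorem Complex.polarCoord_symm_eq_circleMap (p : ℝ × ℝ) :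
    Complex.polarCoord.symm p = circleMap 0 p.1 p.2 := by
  rw [Complex.polarCoord_symm_apply, circleMap_zero, Complex.exp_mul_I]
  push_cast
  ring

theorem Complex.lintegral_eq_lintegral_circleMap {g : ℂ → ℝ≥0∞} (hg : Measurable g) :
    ∫⁻ z, g z = ∫⁻ r in Ioi 0, ENNReal.ofReal r * ∫⁻ θ in Ioc (-π) π, g (circleMap 0 r θ) := by
  rw [← Complex.lintegral_comp_polarCoord_symm, polarCoord_target, Measure.volume_eq_prod,
    ← Measure.prod_restrict]
  simp only [Complex.polarCoord_symm_eq_circleMap, smul_eq_mul]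
  have hmeas : Measurable fun p : ℝ × ℝ => ENNReal.ofReal p.1 * g (circleMap 0 p.1 p.2) :=
    measurable_fst.ennreal_ofReal.mul (hg.comp circleMap.continuous.measurable)
  rw [lintegral_prod _ hmeas.aemeasurable]
  refine lintegral_congr fun r => ?_
  rw [Measure.restrict_congr_set Ioo_ae_eq_Ioc]
  exact lintegral_const_mul' _ _ ENNReal.ofReal_ne_top

theorem lintegral_Ioi_pow_mul_exp_neg_sq (n : ℕ) :
    ∫⁻ r in Ioi (0 : ℝ), ENNReal.ofReal (r ^ (2 * n + 1) * exp (-r ^ 2)) =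
      ENNReal.ofReal (n.factorial / 2) := by
  have hs : (-1 : ℝ) < (2 * n + 1 : ℕ) := by
    linarith [(Nat.cast_nonneg _ : (0 : ℝ) ≤ (2 * n + 1 : ℕ))]
  have hint := integrableOn_rpow_mul_exp_neg_mul_sq one_pos hs
  have hval := integral_rpow_mul_exp_neg_rpow two_pos hs
  simp only [Real.rpow_natCast, neg_one_mul, Real.rpow_two] at hint hval
  rw [← ofReal_integral_eq_lintegral_ofReal hint, hval]
  · congr 1
    rw [show ((2 * n + 1 : ℕ) + 1 : ℝ) / 2 = n + 1 by push_cast; ring, Gamma_nat_eq_factorial]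
    ring
  · filter_upwards [self_mem_ae_restrict measurableSet_Ioi] with r (hr : 0 < r)
    positivity

theorem lintegral_norm_sq_circleMap_eq_tsum {f : ℂ → ℂ} {a : ℕ → ℂ} (hf : Continuous f)
    (ha : ∀ z, HasSum (fun n => a n * z ^ n) (f z)) (r : ℝ) :
    ∫⁻ θ in Ioc (-π) π, ENNReal.ofReal (‖f (circleMap 0 r θ)‖ ^ 2) =
      ENNReal.ofReal (2 * π) * ∑' n, ENNReal.ofReal (‖a n‖ ^ 2 * r ^ (2 * n)) := by
  have : Fact (0 < 2 * π) := ⟨two_pi_pos⟩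
  set g : AddCircle (2 * π) → ℂ := fun x => f (r * toCircle x)
  -- the Fourier coefficients of `g`: `a n * r ^ n` at `n ≥ 0`, zero at negative indices
  set c : ℤ → ℂ := Int.rec (fun n => a n * (r : ℂ) ^ n) fun _ => 0
  have hc : Summable fun m => ‖c m‖ := by
    convert (summable_norm_mul_pow_of_forall_summable (fun z => (ha z).summable) (r : ℂ)).int_rec
      summable_zero using 2 with m
    cases m
    · rfl
    · simp [c]
  have hcg (x : AddCircle (2 * π)) : HasSum (fun m => c m * fourier m x) (g x) := by
    convert (ha (r * toCircle x)).int_rec hasSum_zero using 1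
    · ext (n | n)
      · change a n * r ^ n * fourier (n : ℤ) x = _
        simp [fourier_apply, toCircle_nsmul, mul_pow, mul_assoc]
      · simp [c]
    · simp [g]
  have hsum : HasSum (fun n => ‖a n‖ ^ 2 * r ^ (2 * n)) (∫ x, ‖g x‖ ^ 2 ∂haarAddCircle) := by
    have h := AddCircle.hasSum_sq_norm_of_hasSum_fourier hc hcg
    rw [← Nat.cast_injective.hasSum_iff] at h
    · convert h using 2 with n
      change _ = ‖a n * r ^ n‖ ^ 2
      rw [norm_mul, norm_pow, Complex.norm_real, Real.norm_eq_abs, mul_pow,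
        pow_right_comm, sq_abs, ← pow_mul]
    · rintro (n | n) hn
      · exact absurd ⟨n, rfl⟩ hn
      · simp [c]
  have hint : Integrable (fun x => ‖g x‖ ^ 2) haarAddCircle :=
    ((hf.comp (continuous_const.mul (continuous_subtype_val.comp continuous_toCircle))).norm.pow
      2).integrable_of_hasCompactSupport (.of_compactSpace _)
  calc ∫⁻ θ in Ioc (-π) π, ENNReal.ofReal (‖f (circleMap 0 r θ)‖ ^ 2)
      = ∫⁻ x, ENNReal.ofReal (‖g x‖ ^ 2) := by
        have hIoc : Ioc (-π) (-π + 2 * π) = Ioc (-π) π := by ring_nf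
        rw [← AddCircle.lintegral_preimage (2 * π) (-π), hIoc]
        refine setLIntegral_congr_fun measurableSet_Ioc fun θ _ => ?_
        simp [g, circleMap_zero, toCircle_apply_mk]
    _ = ENNReal.ofReal (2 * π) * ∫⁻ x, ENNReal.ofReal (‖g x‖ ^ 2) ∂haarAddCircle := by
        rw [volume_eq_smul_haarAddCircle, lintegral_smul_measure, smul_eq_mul]
    _ = _ := by
        rw [← ofReal_integral_eq_lintegral_ofReal hint (.of_forall fun x => by positivity),
          ← hsum.tsum_eq, ENNReal.ofReal_tsum_of_nonneg
          (fun n => mul_nonneg (sq_nonneg _) ((even_two_mul n).pow_nonneg r)) hsum.summable]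

theorem radius_mul_lintegral_norm_sq_mul_gaussian_circleMap {f : ℂ → ℂ} {a : ℕ → ℂ}
    (hf : Continuous f) (ha : ∀ z, HasSum (fun n => a n * z ^ n) (f z)) {r : ℝ} (hr : 0 ≤ r) :
    ENNReal.ofReal r * ∫⁻ θ in Ioc (-π) π,
        ENNReal.ofReal (‖f (circleMap 0 r θ)‖ ^ 2 * exp (-‖circleMap 0 r θ‖ ^ 2)) =
      ENNReal.ofReal (2 * π) * ∑' n, ENNReal.ofReal (‖a n‖ ^ 2) *
        ENNReal.ofReal (r ^ (2 * n + 1) * exp (-r ^ 2)) := by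
  simp_rw [norm_circleMap_zero, abs_of_nonneg hr, ENNReal.ofReal_mul (sq_nonneg _)]
  rw [lintegral_mul_const' _ _ ENNReal.ofReal_ne_top,
    lintegral_norm_sq_circleMap_eq_tsum hf ha r, ← ENNReal.tsum_mul_left, ← ENNReal.tsum_mul_right,
    ← ENNReal.tsum_mul_left, ← ENNReal.tsum_mul_left]
  refine tsum_congr fun n => ?_
  rw [← ENNReal.ofReal_mul (by positivity), ← ENNReal.ofReal_mul (by positivity),
    ← ENNReal.ofReal_mul (by positivity), ← ENNReal.ofReal_mul (by positivity),
    ← ENNReal.ofReal_mul (by positivity)]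
  congr 1
  ring

/-- If `φ : ℂ → ℂ` is entire with Taylor expansion `φ(z) = ∑ aₙ zⁿ` at every point,
then `∫_ℂ |φ(z)|² e^{-|z|²} dA(z) = π ∑ n! |aₙ|²`, both sides in `[0, ∞]`. -/
theorem bargmann_norm_eq_sum_factorial (φ : ℂ → ℂ) (a : ℕ → ℂ)
    (hφ : Differentiable ℂ φ)
    (ha : ∀ z : ℂ, HasSum (fun n : ℕ => a n * z ^ n) (φ z)) :
    (∫⁻ z : ℂ, ENNReal.ofReal (‖φ z‖ ^ 2 * Real.exp (-‖z‖ ^ 2))) =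
      ENNReal.ofReal Real.pi *
        ∑' n : ℕ, ENNReal.ofReal ((n.factorial : ℝ) * ‖a n‖ ^ 2) := by
  have hcont := hφ.continuous
  calc _ = ∫⁻ r in Ioi 0, ENNReal.ofReal (2 * π) * ∑' n, ENNReal.ofReal (‖a n‖ ^ 2) *
          ENNReal.ofReal (r ^ (2 * n + 1) * exp (-r ^ 2)) := by
        rw [Complex.lintegral_eq_lintegral_circleMap (by fun_prop)]
        exact setLIntegral_congr_fun measurableSet_Ioi fun r (hr : 0 < r) =>
          radius_mul_lintegral_norm_sq_mul_gaussian_circleMap hcont ha hr.le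
    _ = ENNReal.ofReal (2 * π) *
          ∑' n, ENNReal.ofReal (‖a n‖ ^ 2) * ENNReal.ofReal (n.factorial / 2) := by
        rw [lintegral_const_mul' _ _ ENNReal.ofReal_ne_top, lintegral_tsum fun n => by fun_prop]
        simp_rw [lintegral_const_mul' _ _ ENNReal.ofReal_ne_top, lintegral_Ioi_pow_mul_exp_neg_sq]
    _ = _ := by
        rw [← ENNReal.tsum_mul_left, ← ENNReal.tsum_mul_left]
        refine tsum_congr fun n => ?_
        rw [← ENNReal.ofReal_mul (by positivity), ← ENNReal.ofReal_mul (by positivity),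
          ← ENNReal.ofReal_mul (by positivity)]
        congr 1
        ring
end

section
/- For all z, w ∈ ℂ: ∫_ℝ A(z,u) · conj(A(w,u)) du = √π · e^{z·conj(w)}, where A(z,u) = exp(−u²/2 + √2·u·z − z²/2). In particular, for every z ∈ ℂ the function u ↦ A(z,u) is square-integrable on ℝ with ∫_ℝ |A(z,u)|² du = √π · e^{|z|²}. -/
/-!
The product `A(z,u) · conj A(w,u)` is the Gaussian `exp(-u² + √2 (z + w̄) u - (z² + w̄²)/2)`.
Completing the square gives `√π · exp(-(z² + w̄²)/2 + (z + w̄)²/2) = √π · e^{z w̄}`, and on the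
diagonal `w = z` the integrand is `|A(z,u)|²`, which yields the square-integrability and the norm.
-/

open MeasureTheory

/-- The Bargmann kernel `A(z,u) = exp(-u²/2 + √2 u z - z²/2)`. -/
noncomputable def bargmannKernel (z : ℂ) (u : ℝ) : ℂ :=
  Complex.exp (-(u : ℂ) ^ 2 / 2 + (Real.sqrt 2 : ℂ) * (u : ℂ) * z - z ^ 2 / 2)

open Complex ComplexConjugate

theorem integral_cexp_neg_sq_add_mul_add (c d : ℂ) :
    ∫ x : ℝ, cexp (-x ^ 2 + c * x + d) = (Real.sqrt Real.pi : ℂ) * cexp (d + c ^ 2 / 4) := by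
  have h := integral_cexp_quadratic (b := -1) (by norm_num) c d
  simp only [neg_one_mul, neg_neg, div_one] at h
  rw [h, Real.sqrt_eq_rpow, ofReal_cpow Real.pi_nonneg]
  congr 2
  · norm_num
  · ring

theorem bargmannKernel_mul_conj (z w : ℂ) (u : ℝ) :
    bargmannKernel z u * conj (bargmannKernel w u) =
      cexp (-u ^ 2 + (Real.sqrt 2 * (z + conj w)) * u - (z ^ 2 + conj w ^ 2) / 2) := by
  simp only [bargmannKernel, ← exp_conj, ← exp_add, map_add, map_sub, map_div₀, map_neg, map_pow,
    map_mul, conj_ofReal, map_ofNat]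
  ring_nf

theorem integrable_bargmannKernel_mul_conj (z w : ℂ) :
    Integrable fun u : ℝ => bargmannKernel z u * conj (bargmannKernel w u) := by
  simp_rw [bargmannKernel_mul_conj, sub_eq_add_neg, ← neg_one_mul ((_ : ℂ) ^ 2)]
  exact integrable_cexp_quadratic' (by norm_num) _ _

theorem integral_bargmannKernel_mul_conj (z w : ℂ) :
    ∫ u : ℝ, bargmannKernel z u * conj (bargmannKernel w u) =
      (Real.sqrt Real.pi : ℂ) * cexp (z * conj w) := by
  have hsqrt2 : (Real.sqrt 2 : ℂ) ^ 2 = 2 := by norm_cast; simp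
  simp_rw [bargmannKernel_mul_conj, sub_eq_add_neg, integral_cexp_neg_sq_add_mul_add, mul_pow,
    hsqrt2]
  ring_nf

/-- `∫_ℝ A(z,u) conj(A(w,u)) du = √π e^{z conj(w)}`; in particular
`u ↦ A(z,u)` is square-integrable with `∫_ℝ |A(z,u)|² du = √π e^{|z|²}`. -/
theorem bargmannKernel_inner (z w : ℂ) :
    ((∫ u : ℝ, bargmannKernel z u * (starRingEnd ℂ) (bargmannKernel w u)) =
      (Real.sqrt Real.pi : ℂ) * Complex.exp (z * (starRingEnd ℂ) w)) ∧
    Integrable (fun u : ℝ => ‖bargmannKernel z u‖ ^ 2) ∧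
    ((∫ u : ℝ, ‖bargmannKernel z u‖ ^ 2) =
      Real.sqrt Real.pi * Real.exp (‖z‖ ^ 2)) := by
  have hnorm_sq (u : ℝ) : bargmannKernel z u * conj (bargmannKernel z u) =
      ((‖bargmannKernel z u‖ ^ 2 : ℝ) : ℂ) := by
    rw [mul_conj']; push_cast; rfl
  refine ⟨integral_bargmannKernel_mul_conj z w, ?_, ?_⟩
  · simpa only [hnorm_sq, RCLike.re_to_complex, ofReal_re] using
      (integrable_bargmannKernel_mul_conj z z).re
  · apply ofReal_injective
    rw [← integral_complex_ofReal, ← funext hnorm_sq, integral_bargmannKernel_mul_conj, mul_conj']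
    push_cast
    rfl
end

section
/- Let φ : ℂ → ℂ be an entire function with ∫_ℂ |φ(w)|² e^{−|w|²} dA(w) < ∞. Then for every z ∈ ℂ the reproducing formula holds: φ(z) = (1/π) ∫_ℂ φ(w) · e^{z·conj(w)} · e^{−|w|²} dA(w). (The Bargmann space is a reproducing kernel Hilbert space with kernel K(z,w) = e^{z·conj(w)}.) -/
/-!
Translating by `z`, the weight `e^{z w̄} e^{-|w|²}` at `w = z + u` becomes
`e^{-z̄ u} e^{-|u|²}`, so the integral is the Gaussian average of the entire function
`h u = φ (z + u) e^{-z̄ u}`.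
In polar coordinates a radial average of an entire function reduces, by the mean value property
on circles, to its value at the centre, which gives `π h 0 = π φ z`. Integrability of the
integrand follows from AM–GM: it is bounded by `|φ|² e^{-|w|²}` plus a translated Gaussian.
-/

open MeasureTheory Set Real ComplexConjugate

section PolarCoord

variable {E : Type*} [NormedAddCommGroup E] [NormedSpace ℝ E]

theorem MeasureTheory.Integrable.comp_polarCoord_symm {f : ℝ × ℝ → E} (hf : Integrable f) :
    IntegrableOn (fun p ↦ p.1 • f (polarCoord.symm p)) polarCoord.target := by
  have hsource : IntegrableOn f (polarCoord.symm '' polarCoord.target) := by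
    rw [polarCoord.symm_image_target_eq_source]
    exact hf.integrableOn
  refine ((integrableOn_image_iff_integrableOn_abs_det_fderiv_smul volume
    polarCoord.open_target.measurableSet
    (fun p _ ↦ (hasFDerivAt_polarCoord_symm p).hasFDerivWithinAt) polarCoord.symm.injOn f).mp
    hsource).congr_fun (fun p hp ↦ ?_) polarCoord.open_target.measurableSet
  dsimp only
  rw [det_fderivPolarCoordSymm, abs_of_pos hp.1]

theorem MeasureTheory.Integrable.comp_complexPolarCoord_symm {f : ℂ → E} (hf : Integrable f) :
    IntegrableOn (fun p ↦ p.1 • f (Complex.polarCoord.symm p)) polarCoord.target :=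
  Integrable.comp_polarCoord_symm <|
    (Complex.volume_preserving_equiv_real_prod.symm.integrable_comp_emb
      Complex.measurableEquivRealProd.symm.measurableEmbedding).mpr hf

theorem Complex.polarCoord_symm_eq_circleMap_s7 (r θ : ℝ) :
    Complex.polarCoord.symm (r, θ) = circleMap 0 r θ := by
  simp [circleMap, Complex.exp_mul_I, ← Complex.ofReal_cos, ← Complex.ofReal_sin]

end PolarCoord

section MeanValue

variable {E : Type*} [NormedAddCommGroup E] [NormedSpace ℂ E] [CompleteSpace E]

theorem Differentiable.integral_Ioo_circleMap {h : ℂ → E} (hh : Differentiable ℂ h) (c : ℂ)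
    (r : ℝ) : ∫ θ in Ioo (-π) π, h (circleMap c r θ) = (2 * π) • h c := by
  have hper : Function.Periodic (fun θ ↦ h (circleMap c r θ)) (2 * π) :=
    (periodic_circleMap c r).comp h
  have hmean := hh.diffContOnCl.circleAverage (c := c) (R := r)
  rw [circleAverage_def, inv_smul_eq_iff₀ (by positivity)] at hmean
  rw [← integral_Ioc_eq_integral_Ioo, ← intervalIntegral.integral_of_le (by linarith [pi_pos]),
    ← hmean, ← zero_add (2 * π), ← hper.intervalIntegral_add_eq (-π) 0]
  ring_nf

theorem Differentiable.integral_radial_smul {h : ℂ → E} (hh : Differentiable ℂ h)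
    {g : ℝ → ℝ} (hi : Integrable fun u : ℂ ↦ g ‖u‖ • h u) :
    ∫ u : ℂ, g ‖u‖ • h u = (2 * π * ∫ r in Ioi 0, r * g r) • h 0 := by
  have hpolar := hi.comp_complexPolarCoord_symm
  have htarget : polarCoord.target = Ioi 0 ×ˢ Ioo (-π) π := rfl
  rw [htarget, Measure.volume_eq_prod] at hpolar
  rw [← Complex.integral_comp_polarCoord_symm, htarget, Measure.volume_eq_prod,
    setIntegral_prod _ hpolar, ← integral_const_mul,
    ← integral_smul_const]
  refine setIntegral_congr_fun measurableSet_Ioi fun r (hr : 0 < r) ↦ ?_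
  simp only [Complex.polarCoord_symm_eq_circleMap_s7, norm_circleMap_zero, abs_of_pos hr, smul_smul]
  rw [integral_smul, hh.integral_Ioo_circleMap, smul_smul]
  ring_nf

theorem Differentiable.integral_radial_smul_eq_integral_smul {h : ℂ → E}
    (hh : Differentiable ℂ h) {g : ℝ → ℝ} (hi : Integrable fun u : ℂ ↦ g ‖u‖ • h u)
    (hg : Integrable fun u : ℂ ↦ g ‖u‖) :
    ∫ u : ℂ, g ‖u‖ • h u = (∫ u : ℂ, g ‖u‖) • h 0 := by
  have hone := (differentiable_const (1 : ℂ)).integral_radial_smul (g := g)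
    (by simpa using hg.ofReal (𝕜 := ℂ))
  simp only [Complex.real_smul, mul_one] at hone
  rw [integral_complex_ofReal, Complex.ofReal_inj] at hone
  rw [hh.integral_radial_smul hi, hone]

end MeanValue

theorem integral_exp_neg_norm_sq : ∫ u : ℂ, Real.exp (-‖u‖ ^ 2) = π := by
  simpa using GaussianFourier.integral_rexp_neg_mul_sq_norm (V := ℂ) one_pos

theorem integrable_exp_neg_norm_sq : Integrable fun u : ℂ ↦ Real.exp (-‖u‖ ^ 2) :=
  .of_integral_ne_zero (by rw [integral_exp_neg_norm_sq]; exact pi_ne_zero)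

-- AM–GM, after `‖z‖² - ‖w - z‖² = 2 Re (z w̄) - ‖w‖²`.
theorem mul_exp_re_mul_conj_mul_exp_le (a : ℝ) (z w : ℂ) :
    a * Real.exp (z * conj w).re * Real.exp (-‖w‖ ^ 2) ≤
      (a ^ 2 * Real.exp (-‖w‖ ^ 2) + Real.exp (‖z‖ ^ 2) * Real.exp (-‖w - z‖ ^ 2)) / 2 := by
  set t := (z * conj w).re
  set n := ‖w‖ ^ 2
  have hnorm : ‖z‖ ^ 2 - ‖w - z‖ ^ 2 = 2 * t - n := by
    simp only [t, n, Complex.sq_norm, Complex.normSq_apply, Complex.mul_re, Complex.conj_re,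
      Complex.conj_im, Complex.sub_re, Complex.sub_im]
    ring
  have hx : (a * Real.exp (-n / 2)) ^ 2 = a ^ 2 * Real.exp (-n) := by
    rw [mul_pow, ← Real.exp_nat_mul]
    ring_nf
  have hy : Real.exp (t - n / 2) ^ 2 = Real.exp (‖z‖ ^ 2) * Real.exp (-‖w - z‖ ^ 2) := by
    rw [← Real.exp_nat_mul, ← Real.exp_add]
    congr 1
    linarith
  have hxy : a * Real.exp t * Real.exp (-n) = (a * Real.exp (-n / 2)) * Real.exp (t - n / 2) := by
    rw [mul_assoc, mul_assoc, ← Real.exp_add, ← Real.exp_add]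
    ring_nf
  rw [hxy, ← hx, ← hy]
  linarith [two_mul_le_add_sq (a * Real.exp (-n / 2)) (Real.exp (t - n / 2))]

theorem integrable_mul_cexp_mul_conj_mul_gaussian {φ : ℂ → ℂ} (hφ : AEStronglyMeasurable φ)
    (hsq : Integrable fun w ↦ ‖φ w‖ ^ 2 * Real.exp (-‖w‖ ^ 2)) (z : ℂ) :
    Integrable fun w ↦ φ w * Complex.exp (z * conj w) * (Real.exp (-‖w‖ ^ 2) : ℂ) := by
  refine Integrable.mono' ((hsq.add
    ((integrable_exp_neg_norm_sq.comp_sub_right z).const_mul (Real.exp (‖z‖ ^ 2)))).div_const 2)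
    (by fun_prop) (ae_of_all _ fun w ↦ ?_)
  simpa only [Pi.add_apply, norm_mul, Complex.norm_exp, Complex.norm_real,
    Real.norm_of_nonneg (Real.exp_pos _).le] using
    mul_exp_re_mul_conj_mul_exp_le ‖φ w‖ z w

theorem cexp_mul_conj_add_mul_gaussian (z u : ℂ) :
    Complex.exp (z * conj (z + u)) * (Real.exp (-‖z + u‖ ^ 2) : ℂ) =
      Complex.exp (-conj z * u) * (Real.exp (-‖u‖ ^ 2) : ℂ) := by
  simp only [Complex.ofReal_exp, Complex.ofReal_neg, Complex.ofReal_pow, ← Complex.mul_conj',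
    ← Complex.exp_add, map_add]
  ring_nf

/-- Reproducing formula in the Bargmann space: for an entire `φ` that is
square-integrable against the Gaussian weight,
`φ(z) = (1/π) ∫_ℂ φ(w) e^{z conj(w)} e^{-|w|²} dA(w)`. -/
theorem bargmann_reproducing (φ : ℂ → ℂ)
    (hφ : Differentiable ℂ φ)
    (hL2 : (∫⁻ w : ℂ, ENNReal.ofReal (‖φ w‖ ^ 2 * Real.exp (-‖w‖ ^ 2))) < ⊤) :
    ∀ z : ℂ,
      φ z = ((1 / Real.pi : ℝ) : ℂ) *
        ∫ w : ℂ, φ w * Complex.exp (z * (starRingEnd ℂ) w) *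
          (Real.exp (-‖w‖ ^ 2) : ℝ) := by
  intro z
  have hsq : Integrable fun w ↦ ‖φ w‖ ^ 2 * Real.exp (-‖w‖ ^ 2) :=
    ⟨hφ.continuous.aestronglyMeasurable.norm.pow 2 |>.mul (by fun_prop),
      (hasFiniteIntegral_iff_ofReal (ae_of_all _ fun w ↦ by positivity)).mpr hL2⟩
  set h : ℂ → ℂ := fun u ↦ φ (z + u) * Complex.exp (-conj z * u)
  have hh : Differentiable ℂ h := by fun_prop
  have hshift : ∀ u,
      φ (z + u) * Complex.exp (z * conj (z + u)) * (Real.exp (-‖z + u‖ ^ 2) : ℂ) =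
        Real.exp (-‖u‖ ^ 2) • h u := fun u ↦ by
    rw [mul_assoc, cexp_mul_conj_add_mul_gaussian, Complex.real_smul]
    ring
  have hint := (integrable_mul_cexp_mul_conj_mul_gaussian hφ.continuous.aestronglyMeasurable
    hsq z).comp_add_left z
  simp only [hshift] at hint
  rw [← integral_add_left_eq_self _ z]
  simp only [hshift]
  rw [hh.integral_radial_smul_eq_integral_smul (g := fun r ↦ Real.exp (-r ^ 2)) hint
    integrable_exp_neg_norm_sq, integral_exp_neg_norm_sq]
  simp [h]
end

section
/- Let f : ℝ → ℂ be square-integrable (∫_ℝ |f(u)|² du < ∞). Then for every z ∈ ℂ the function u ↦ A(z,u)·f(u) is integrable on ℝ, and the Segal–Bargmann transform (SB f)(z) = ∫_ℝ A(z,u) f(u) du defines an entire function of z (complex differentiable on all of ℂ). -/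
/-!
For `‖z‖ ≤ R` the kernel satisfies `|A(z,u)| ≤ e^{5R²/2} e^{-u²/4}`, since the linear term
`√2 u Re z` is absorbed by half of the Gaussian decay, and its `z`-derivative
`(√2 u - z) A(z,u)` is likewise `O(e^{-u²/8})`. Gaussians are square integrable, so by
Cauchy–Schwarz both `A(z,·) f` and `∂_z A(z,·) f` are dominated, locally uniformly in `z`, by
integrable functions; differentiation under the integral sign then makes `SB f` holomorphic.
-/

open MeasureTheory

open Real Filter

lemma abs_le_two_mul_exp_sq_div_eight (u : ℝ) : |u| ≤ 2 * exp (u ^ 2 / 8) := by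
  nlinarith [add_one_le_exp (u ^ 2 / 8), sq_nonneg (|u| - 4), sq_abs u]

lemma memLp_two_exp_neg_mul_sq {b : ℝ} (hb : 0 < b) :
    MemLp (fun u : ℝ => exp (-b * u ^ 2)) 2 volume := by
  refine (memLp_two_iff_integrable_sq (by fun_prop)).2 ?_
  convert integrable_exp_neg_mul_sq (mul_pos two_pos hb) using 2 with u
  rw [← exp_nat_mul]
  ring_nf

lemma integrable_exp_neg_mul_sq_mul_norm {E : Type*} [NormedAddCommGroup E] {b : ℝ} (hb : 0 < b)
    {f : ℝ → E} (hf : MemLp f 2 volume) :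
    Integrable (fun u => exp (-b * u ^ 2) * ‖f u‖) :=
  (memLp_two_exp_neg_mul_sq hb).integrable_mul hf.norm

lemma continuous_bargmannKernel (z : ℂ) : Continuous (bargmannKernel z) := by
  unfold bargmannKernel
  fun_prop

lemma hasDerivAt_bargmannKernel (z : ℂ) (u : ℝ) :
    HasDerivAt (bargmannKernel · u) ((√2 * u - z) * bargmannKernel z u) z := by
  have h : HasDerivAt (fun w : ℂ => -(u : ℂ) ^ 2 / 2 + √2 * u * w - w ^ 2 / 2) (√2 * u - z) z := by
    refine ((((hasDerivAt_id z).const_mul (√2 * (u : ℂ))).const_add (-(u : ℂ) ^ 2 / 2)).fun_sub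
      ((hasDerivAt_pow 2 z).div_const 2)).congr_deriv ?_
    push_cast
    ring
  simpa [bargmannKernel, mul_comm] using h.cexp

lemma norm_bargmannKernel (z : ℂ) (u : ℝ) :
    ‖bargmannKernel z u‖ = exp (-u ^ 2 / 2 + √2 * u * z.re - (z ^ 2).re / 2) := by
  rw [bargmannKernel, Complex.norm_exp]
  congr 1
  simp [← Complex.ofReal_pow]

lemma norm_bargmannKernel_le {R : ℝ} {z : ℂ} (hz : ‖z‖ ≤ R) (u : ℝ) :
    ‖bargmannKernel z u‖ ≤ exp (5 * R ^ 2 / 2) * exp (-(1 / 4) * u ^ 2) := by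
  rw [norm_bargmannKernel, ← exp_add, exp_le_exp]
  have hre : u * z.re ≤ |u| * R := by
    calc u * z.re ≤ |u * z.re| := le_abs_self _
      _ = |u| * |z.re| := abs_mul _ _
      _ ≤ |u| * R := by gcongr; exact (Complex.abs_re_le_norm z).trans hz
  have hsq : -(z ^ 2).re ≤ R ^ 2 := by
    calc -(z ^ 2).re ≤ ‖z ^ 2‖ := (neg_le_abs _).trans (Complex.abs_re_le_norm _)
      _ = ‖z‖ ^ 2 := norm_pow _ _
      _ ≤ R ^ 2 := by gcongr
  have hamgm : √2 * (|u| * R) ≤ u ^ 2 / 4 + 2 * R ^ 2 := by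
    nlinarith [sq_nonneg (|u| / 2 - √2 * R), sq_abs u, sq_sqrt (zero_le_two : (0 : ℝ) ≤ 2)]
  nlinarith [mul_le_mul_of_nonneg_left hre (sqrt_nonneg 2)]

lemma norm_sqrt_two_mul_sub_le {R : ℝ} {z : ℂ} (hz : ‖z‖ ≤ R) (u : ℝ) :
    ‖(√2 * u - z : ℂ)‖ ≤ (3 + R) * exp (u ^ 2 / 8) := by
  have hR : 0 ≤ R := (norm_nonneg z).trans hz
  have hexp : 1 ≤ exp (u ^ 2 / 8) := one_le_exp (by positivity)
  have hu := abs_le_two_mul_exp_sq_div_eight u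
  have hsqrt : √2 ≤ 3 / 2 := by rw [sqrt_le_left (by norm_num)]; norm_num
  calc ‖(√2 * u - z : ℂ)‖ ≤ √2 * |u| + R := by
        refine (norm_sub_le _ _).trans (add_le_add (le_of_eq ?_) hz)
        simp [abs_of_nonneg (sqrt_nonneg 2)]
    _ ≤ (3 + R) * exp (u ^ 2 / 8) := by
        nlinarith [mul_le_mul hsqrt hu (abs_nonneg u) (by norm_num : (0 : ℝ) ≤ 3 / 2)]

lemma norm_deriv_bargmannKernel_le {R : ℝ} {z : ℂ} (hz : ‖z‖ ≤ R) (u : ℝ) :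
    ‖(√2 * u - z) * bargmannKernel z u‖ ≤
      (3 + R) * exp (5 * R ^ 2 / 2) * exp (-(1 / 8) * u ^ 2) := by
  have hR : 0 ≤ R := (norm_nonneg z).trans hz
  calc ‖(√2 * u - z) * bargmannKernel z u‖
      ≤ (3 + R) * exp (u ^ 2 / 8) * (exp (5 * R ^ 2 / 2) * exp (-(1 / 4) * u ^ 2)) := by
        rw [norm_mul]
        exact mul_le_mul (norm_sqrt_two_mul_sub_le hz u) (norm_bargmannKernel_le hz u)
          (norm_nonneg _) (by positivity)
    _ = (3 + R) * exp (5 * R ^ 2 / 2) * exp (-(1 / 8) * u ^ 2) := by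
        rw [mul_mul_mul_comm, ← exp_add, mul_assoc]
        ring_nf

/-- For `f ∈ L²(ℝ)`, the integrand of the Segal–Bargmann transform is
integrable for every `z`, and `SB f` is an entire function. -/
theorem segalBargmann_wellDefined_entire (f : ℝ → ℂ)
    (hf : MemLp f 2 (volume : Measure ℝ)) :
    (∀ z : ℂ, Integrable (fun u : ℝ => bargmannKernel z u * f u)) ∧
    Differentiable ℂ (fun z : ℂ => ∫ u : ℝ, bargmannKernel z u * f u) := by
  have hmeas : ∀ z, AEStronglyMeasurable (fun u => bargmannKernel z u * f u) :=
    fun z => (continuous_bargmannKernel z).aestronglyMeasurable.mul hf.1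
  have hint : ∀ z, Integrable (fun u => bargmannKernel z u * f u) := fun z =>
    ((integrable_exp_neg_mul_sq_mul_norm (b := 1 / 4) (by norm_num) hf).const_mul _).mono'
      (hmeas z) (ae_of_all _ fun u => by
        rw [norm_mul, ← mul_assoc]
        exact mul_le_mul_of_nonneg_right (norm_bargmannKernel_le le_rfl u) (norm_nonneg _))
  refine ⟨hint, fun z₀ => ?_⟩
  set R := ‖z₀‖ + 1
  have hball : ∀ z ∈ Metric.ball z₀ 1, ‖z‖ ≤ R := fun z hz =>
    (norm_le_norm_add_norm_sub' z z₀).trans (by rw [mem_ball_iff_norm] at hz; linarith)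
  have hbound : ∀ u, ∀ z ∈ Metric.ball z₀ 1, ‖(√2 * u - z) * bargmannKernel z u * f u‖ ≤
      (3 + R) * exp (5 * R ^ 2 / 2) * (exp (-(1 / 8) * u ^ 2) * ‖f u‖) := fun u z hz => by
    rw [norm_mul, ← mul_assoc (_ * _)]
    exact mul_le_mul_of_nonneg_right (norm_deriv_bargmannKernel_le (hball z hz) u) (norm_nonneg _)
  obtain ⟨-, hderiv⟩ := hasDerivAt_integral_of_dominated_loc_of_deriv_le
    (Metric.ball_mem_nhds z₀ one_pos) (Eventually.of_forall hmeas) (hint z₀)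
    (((by fun_prop : Continuous fun u : ℝ => (√2 * u - z₀ : ℂ)).mul
      (continuous_bargmannKernel z₀)).aestronglyMeasurable.mul hf.1)
    (ae_of_all _ hbound)
    ((integrable_exp_neg_mul_sq_mul_norm (by norm_num) hf).const_mul _)
    (ae_of_all _ fun u z _ => (hasDerivAt_bargmannKernel z u).mul_const (f u))
  exact hderiv.differentiableAt
end

section
/- The Segal–Bargmann transform is injective: if f : ℝ → ℂ is square-integrable and ∫_ℝ A(z,u) f(u) du = 0 for every z ∈ ℂ, then f = 0 almost everywhere on ℝ. -/
/-!
On the imaginary axis `z = -i√2πξ` the Bargmann kernel factors as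
`A(z,u) = e^{π²ξ²} e^{-2πiuξ} e^{-u²/2}`, so the vanishing of the transform there says that the
Fourier transform of the integrable function `e^{-u²/2} f` vanishes identically. The Fourier
transform is injective on `L¹`: for integrable `g` and Schwartz `ψ`, `∫ 𝓕ψ • g = ∫ ψ • 𝓕g`, and
every Schwartz function is some `𝓕ψ`, so `g` integrates to zero against all test functions.
-/

open MeasureTheory

open Complex Real FourierTransform

theorem MeasureTheory.Integrable.ae_eq_zero_of_fourier_eq_zero
    {V E : Type*} [NormedAddCommGroup V] [InnerProductSpace ℝ V] [FiniteDimensional ℝ V]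
    [MeasurableSpace V] [BorelSpace V] [NormedAddCommGroup E] [NormedSpace ℂ E]
    [CompleteSpace E] {g : V → E} (hg : Integrable g) (h : 𝓕 g = 0) :
    ∀ᵐ x, g x = 0 := by
  have integral_schwartz_smul_eq_zero (φ : SchwartzMap V ℂ) : ∫ x, φ x • g x = 0 := by
    obtain ⟨ψ, rfl⟩ : ∃ ψ, 𝓕 ψ = φ := ⟨𝓕⁻ φ, FourierInvPair.fourier_fourierInv_eq φ⟩
    have swap := VectorFourier.integral_fourierIntegral_smul_eq_flip (L := innerₗ V)
      (μ := volume) continuous_fourierChar continuous_inner ψ.integrable hg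
    rw [flip_innerₗ] at swap
    have hg_zero : VectorFourier.fourierIntegral 𝐞 volume (innerₗ V) g = 0 := h
    rw [SchwartzMap.fourier_coe]
    exact swap.trans (by simp [hg_zero])
  refine ae_eq_zero_of_integral_contDiff_smul_eq_zero hg.locallyIntegrable fun φ hφ hφ_supp => ?_
  have hφ_supp' : HasCompactSupport (ofRealCLM ∘ φ) := hφ_supp.comp_left rfl
  exact integral_schwartz_smul_eq_zero (hφ_supp'.toSchwartzMap (by fun_prop))

theorem memLp_two_cexp_neg_mul_sq {b : ℝ} (hb : 0 < b) :
    MemLp (fun x : ℝ => cexp (-b * x ^ 2)) 2 := by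
  refine (memLp_two_iff_integrable_sq_norm (by fun_prop)).2 ?_
  have norm_sq_eq :
      (fun x : ℝ => ‖cexp (-b * x ^ 2)‖ ^ 2) = fun x => rexp (-(2 * b) * x ^ 2) := by
    ext x
    rw [Complex.norm_exp, ← Real.exp_nat_mul]
    congr 1
    norm_cast
    ring
  rw [norm_sq_eq]
  exact integrable_exp_neg_mul_sq (by positivity)

theorem bargmannKernel_neg_mul_I (ξ u : ℝ) :
    bargmannKernel (-(√2 * π * ξ) * I) u =
      cexp (π ^ 2 * ξ ^ 2) * (cexp (↑(-2 * π * u * ξ) * I) * cexp (-(1 / 2 : ℝ) * u ^ 2)) := by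
  have sqrt_two_sq : ((√2 : ℝ) : ℂ) ^ 2 = 2 := by norm_cast; simp
  rw [bargmannKernel, ← Complex.exp_add, ← Complex.exp_add]
  congr 1
  push_cast
  linear_combination (-(u * π * ξ * I) - π ^ 2 * ξ ^ 2 * I ^ 2 / 2) * sqrt_two_sq
    - π ^ 2 * ξ ^ 2 * I_sq

theorem integral_bargmannKernel_neg_mul_I_mul (f : ℝ → ℂ) (ξ : ℝ) :
    ∫ u, bargmannKernel (-(√2 * π * ξ) * I) u * f u =
      cexp (π ^ 2 * ξ ^ 2) * 𝓕 (fun u : ℝ => cexp (-(1 / 2 : ℝ) * u ^ 2) * f u) ξ := by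
  rw [fourier_real_eq_integral_exp_smul, ← integral_const_mul]
  congr 1 with u
  rw [bargmannKernel_neg_mul_I, smul_eq_mul]
  ring

/-- The Segal–Bargmann transform is injective on `L²(ℝ)`. -/
theorem segalBargmann_injective (f : ℝ → ℂ)
    (hf : MemLp f 2 (volume : Measure ℝ))
    (h : ∀ z : ℂ, (∫ u : ℝ, bargmannKernel z u * f u) = 0) :
    ∀ᵐ u : ℝ, f u = 0 := by
  set g := fun u : ℝ => cexp (-(1 / 2 : ℝ) * u ^ 2) * f u
  have hg : Integrable g := (memLp_two_cexp_neg_mul_sq one_half_pos).integrable_mul hf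
  have fourier_g : 𝓕 g = 0 := funext fun ξ => by
    have hξ := h (-(√2 * π * ξ) * I)
    rw [integral_bargmannKernel_neg_mul_I_mul] at hξ
    exact (mul_eq_zero.1 hξ).resolve_left (Complex.exp_ne_zero _)
  filter_upwards [hg.ae_eq_zero_of_fourier_eq_zero fourier_g] with u hu
  exact (mul_eq_zero.1 hu).resolve_left (Complex.exp_ne_zero _)
end

section
/- Let n ≥ 1 and let T be the n×n real tridiagonal matrix with diagonal entries a₁,…,aₙ, superdiagonal entries b₁,…,b_{n−1} (in positions (i,i+1)), subdiagonal entries c₁,…,c_{n−1} (in positions (i+1,i)), and all other entries zero. If bᵢ·cᵢ > 0 for every i = 1,…,n−1, then every eigenvalue of T (as a root of its characteristic polynomial over ℂ) is real and has algebraic multiplicity one; that is, T has n distinct real eigenvalues. -/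
/-! With `e₀ = 1` and `e_{k+1} = e_k b_k / c_k`, the products `b_k c_k > 0` make every `e_k`
positive, and conjugating `T` by `D = diag (√e_k)` gives a symmetric tridiagonal matrix `S`
with the same characteristic polynomial, so the eigenvalues are real. Since the superdiagonal
of `S` does not vanish, the equation `S w = μ w` determines `w` from `w₀`, so no two
orthonormal eigenvectors share an eigenvalue and the `n` eigenvalues are distinct. -/

open Polynomial

lemma Fin.eq_or_adjacent_or_far {m : ℕ} (i j : Fin (m + 1)) :
    i = j ∨ (∃ k : Fin m, i = k.castSucc ∧ j = k.succ) ∨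
      (∃ k : Fin m, i = k.succ ∧ j = k.castSucc) ∨ 1 < ((i : ℤ) - (j : ℤ)).natAbs := by
  obtain ⟨i, hi⟩ := i
  obtain ⟨j, hj⟩ := j
  by_cases hfar : 1 < ((i : ℤ) - (j : ℤ)).natAbs
  · exact .inr <| .inr <| .inr hfar
  rcases lt_trichotomy i j with hij | rfl | hij
  · exact .inr <| .inl ⟨⟨i, by omega⟩, Fin.ext rfl, Fin.ext (by simp; omega)⟩
  · exact .inl rfl
  · exact .inr <| .inr <| .inl ⟨⟨j, by omega⟩, Fin.ext (by simp; omega), Fin.ext rfl⟩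

namespace Matrix

variable {m : ℕ}

def IsTridiagonal {R : Type*} {n : ℕ} [Zero R] (M : Matrix (Fin n) (Fin n) R) : Prop :=
  ∀ i j : Fin n, 1 < ((i : ℤ) - (j : ℤ)).natAbs → M i j = 0

lemma IsTridiagonal.eq_zero_of_mulVec_eq_smul {R : Type*} [CommRing R] [NoZeroDivisors R]
    {M : Matrix (Fin (m + 1)) (Fin (m + 1)) R} (hM : M.IsTridiagonal)
    (hsup : ∀ k : Fin m, M k.castSucc k.succ ≠ 0) {μ : R} {w : Fin (m + 1) → R}
    (hw : M *ᵥ w = μ • w) (hw0 : w 0 = 0) : w = 0 := by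
  suffices h : ∀ k : ℕ, ∀ j : Fin (m + 1), (j : ℕ) ≤ k → w j = 0 from
    funext fun j => h j j le_rfl
  intro k
  induction k with
  | zero =>
    intro j hj
    rwa [show j = 0 from Fin.ext (Nat.le_zero.mp hj)]
  | succ k ih =>
    intro j hj
    rcases Nat.lt_or_ge k j with hkj | hjk
    -- row `k` of `M w = μ w` reads `M k (k+1) * w (k+1) = 0`
    · obtain ⟨i, rfl, rfl⟩ : ∃ i : Fin m, j = i.succ ∧ (i : ℕ) = k :=
        ⟨⟨k, by omega⟩, Fin.ext (by simp; omega), rfl⟩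
      have hrow : (M *ᵥ w) i.castSucc = M i.castSucc i.succ * w i.succ := by
        rw [mulVec, dotProduct]
        refine Fintype.sum_eq_single _ fun l hl => ?_
        by_cases hlk : (l : ℕ) ≤ i
        · rw [ih l hlk, mul_zero]
        · rw [hM _ _ (by simp at hl ⊢; omega), zero_mul]
      have hwi : w i.castSucc = 0 := ih _ le_rfl
      rw [hw, Pi.smul_apply, hwi, smul_zero] at hrow
      exact (mul_eq_zero.mp hrow.symm).resolve_left (hsup i)
    · exact ih j hjk

lemma IsHermitian.eigenvalues_injective_of_apply_eq_zero {𝕜 ι : Type*} [RCLike 𝕜]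
    [Fintype ι] [DecidableEq ι] {A : Matrix ι ι 𝕜} (hA : A.IsHermitian) (i₀ : ι)
    (h : ∀ (μ : 𝕜) (w : ι → 𝕜), A *ᵥ w = μ • w → w i₀ = 0 → w = 0) :
    Function.Injective hA.eigenvalues := by
  intro i j hij
  by_contra hne
  set b := hA.eigenvectorBasis
  have heig : ∀ k, A *ᵥ ⇑(b k) = (hA.eigenvalues k : 𝕜) • ⇑(b k) := fun k => by
    rw [hA.mulVec_eigenvectorBasis, RCLike.real_smul_eq_coe_smul (K := 𝕜)]
  -- an eigenvector vanishing at `i₀`; pairing it with `b i` gives `b j i₀ = 0`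
  have hcomb : b j i₀ • b i - b i i₀ • b j = 0 := by
    refine WithLp.ofLp_injective _ (h (hA.eigenvalues i) _ ?_ ?_)
    · simp only [WithLp.ofLp_sub, WithLp.ofLp_smul, mulVec_sub, mulVec_smul, heig, hij,
        smul_sub, smul_comm (b j i₀), smul_comm (b i i₀)]
    · simp [mul_comm]
  have hj0 : b j i₀ = 0 := by
    simpa [inner_sub_right, inner_smul_right, orthonormal_iff_ite.mp b.orthonormal, hne]
      using congr_arg (inner 𝕜 (b i)) hcomb
  exact b.orthonormal.ne_zero j (WithLp.ofLp_injective _ (h _ _ (heig j) hj0))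

section Diagonal

variable {K ι : Type*} [Field K] [Fintype ι] [DecidableEq ι] {d : ι → K}

lemma diagonal_mul_mul_diagonal_inv_apply (T : Matrix ι ι K) (i j : ι) :
    (diagonal d * T * diagonal d⁻¹) i j = d i * T i j * (d j)⁻¹ := by
  simp [mul_diagonal, diagonal_mul]

lemma isSymm_diagonal_mul_mul_diagonal_inv {T : Matrix ι ι K} (hd : ∀ i, d i ≠ 0)
    (h : ∀ i j, d i ^ 2 * T i j = d j ^ 2 * T j i) :
    (diagonal d * T * diagonal d⁻¹).IsSymm := by
  refine IsSymm.ext fun i j => ?_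
  simp only [diagonal_mul_mul_diagonal_inv_apply]
  field_simp [hd i, hd j]
  exact (h i j).symm

lemma charpoly_diagonal_mul_mul_diagonal_inv (T : Matrix ι ι K) (hd : ∀ i, d i ≠ 0) :
    (diagonal d * T * diagonal d⁻¹).charpoly = T.charpoly := by
  rw [charpoly_mul_comm, ← Matrix.mul_assoc, diagonal_mul_diagonal]
  simp [hd]

end Diagonal

lemma IsTridiagonal.exists_pos_mul_eq_mul {K : Type*} [Field K] [LinearOrder K]
    [IsStrictOrderedRing K] {T : Matrix (Fin (m + 1)) (Fin (m + 1)) K} (hT : T.IsTridiagonal)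
    (hbc : ∀ k : Fin m, 0 < T k.castSucc k.succ * T k.succ k.castSucc) :
    ∃ e : Fin (m + 1) → K, (∀ i, 0 < e i) ∧ ∀ i j, e i * T i j = e j * T j i := by
  let e : Fin (m + 1) → K :=
    Fin.induction 1 fun k x => x * (T k.castSucc k.succ / T k.succ k.castSucc)
  have he_succ (k : Fin m) :
      e k.succ = e k.castSucc * (T k.castSucc k.succ / T k.succ k.castSucc) :=
    Fin.induction_succ ..
  have hc (k : Fin m) : T k.succ k.castSucc ≠ 0 := fun h => by simpa [h] using hbc k
  refine ⟨e, fun i => ?_, fun i j => ?_⟩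
  · induction i using Fin.induction with
    | zero => exact one_pos
    | succ k ih => rw [he_succ]; exact mul_pos ih (div_pos_iff.mpr (mul_pos_iff.mp (hbc k)))
  · rcases Fin.eq_or_adjacent_or_far i j with rfl | ⟨k, rfl, rfl⟩ | ⟨k, rfl, rfl⟩ | hfar
    · rfl
    · rw [he_succ]; field_simp [hc k]
    · rw [he_succ]; field_simp [hc k]
    · simp [hT i j hfar, hT j i (by omega)]

lemma IsTridiagonal.eigenvalues_injective {𝕜 : Type*} [RCLike 𝕜]
    {S : Matrix (Fin (m + 1)) (Fin (m + 1)) 𝕜} (hS : S.IsHermitian) (hStri : S.IsTridiagonal)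
    (hsup : ∀ k : Fin m, S k.castSucc k.succ ≠ 0) : Function.Injective hS.eigenvalues :=
  hS.eigenvalues_injective_of_apply_eq_zero 0 fun _ _ hw hw0 =>
    hStri.eq_zero_of_mulVec_eq_smul hsup hw hw0

lemma IsTridiagonal.exists_isHermitian_charpoly_eq {T : Matrix (Fin (m + 1)) (Fin (m + 1)) ℝ}
    (hT : T.IsTridiagonal) (hbc : ∀ k : Fin m, 0 < T k.castSucc k.succ * T k.succ k.castSucc) :
    ∃ S : Matrix (Fin (m + 1)) (Fin (m + 1)) ℝ, S.IsHermitian ∧ S.IsTridiagonal ∧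
      (∀ k : Fin m, S k.castSucc k.succ ≠ 0) ∧ S.charpoly = T.charpoly := by
  obtain ⟨e, he, hsymm⟩ := hT.exists_pos_mul_eq_mul hbc
  have hd (i : Fin (m + 1)) : √(e i) ≠ 0 := (Real.sqrt_pos.mpr (he i)).ne'
  refine ⟨diagonal (fun i => √(e i)) * T * diagonal (fun i => √(e i))⁻¹,
    isHermitian_iff_isSymm.mpr (isSymm_diagonal_mul_mul_diagonal_inv hd fun i j => ?_),
    fun i j hij => ?_, fun k => ?_, charpoly_diagonal_mul_mul_diagonal_inv T hd⟩
  · rw [Real.sq_sqrt (he i).le, Real.sq_sqrt (he j).le, hsymm]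
  · rw [diagonal_mul_mul_diagonal_inv_apply, hT i j hij, mul_zero, zero_mul]
  · rw [diagonal_mul_mul_diagonal_inv_apply]
    exact mul_ne_zero (mul_ne_zero (hd _) fun h => by simpa [h] using hbc k)
      (inv_ne_zero (hd _))

end Matrix

/-- A real tridiagonal matrix whose products of corresponding off-diagonal
entries are positive has `n` distinct real eigenvalues: its characteristic
polynomial over `ℂ` splits into distinct real linear factors. -/
theorem tridiagonal_real_simple_spectrum (n : ℕ) (hn : 1 ≤ n)
    (T : Matrix (Fin n) (Fin n) ℝ)
    (htri : ∀ i j : Fin n, 1 < ((i : ℤ) - (j : ℤ)).natAbs → T i j = 0)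
    (hbc : ∀ (i : Fin n) (h : (i : ℕ) + 1 < n),
      0 < T i ⟨(i : ℕ) + 1, h⟩ * T ⟨(i : ℕ) + 1, h⟩ i) :
    ∃ l : Fin n → ℝ, Function.Injective l ∧
      Matrix.charpoly (T.map (Complex.ofReal ·)) =
        ∏ i : Fin n, (X - C ((l i : ℝ) : ℂ)) := by
  obtain ⟨m, rfl⟩ := Nat.exists_eq_add_of_le' hn
  obtain ⟨S, hS, hStri, hSsup, hchar⟩ :=
    Matrix.IsTridiagonal.exists_isHermitian_charpoly_eq htri fun k => hbc k.castSucc k.succ.isLt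
  refine ⟨hS.eigenvalues, hStri.eigenvalues_injective hS hSsup, ?_⟩
  refine (T.charpoly_map Complex.ofRealHom).trans ?_
  rw [← hchar, hS.charpoly_eq, Polynomial.map_prod]
  simp
end

section
/- Let (aₙ)_{n≥1} be the real sequence determined by a₁ = 1, a₂ = 0, and the Jacobi recurrence n·√(n−1)·a_{n−1} + (n+1)·√n·a_{n+1} = 0 for all n ≥ 2. Then a_{2p} = 0 for all p ≥ 1, there exists a constant C > 0 such that |a_{2p+1}| ≤ C·p^{−3/4} for all p ≥ 1, and the sequence is square-summable: Σ_{n≥1} aₙ² < ∞. (The Jacobi operator with weights ωₙ = (n+1)√n is in the limit circle case at infinity.) -/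
/-- The Jacobi operator with weights `ωₙ = (n+1)√n` is in the limit circle case
at infinity: the solution of `𝕁a = 0` with `a₁ = 1`, `a₂ = 0` vanishes at even
indices, satisfies `|a_{2p+1}| ≤ C p^{-3/4}`, and is square-summable. -/
theorem jacobi_limit_circle (a : ℕ → ℝ)
    (h1 : a 1 = 1) (h2 : a 2 = 0)
    (hrec : ∀ n : ℕ, 2 ≤ n →
      (n : ℝ) * Real.sqrt ((n : ℝ) - 1) * a (n - 1) +
        ((n : ℝ) + 1) * Real.sqrt (n : ℝ) * a (n + 1) = 0) :
    (∀ p : ℕ, 1 ≤ p → a (2 * p) = 0) ∧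
    (∃ C : ℝ, 0 < C ∧ ∀ p : ℕ, 1 ≤ p →
      |a (2 * p + 1)| ≤ C * (p : ℝ) ^ (-(3 : ℝ) / 4)) ∧
    Summable (fun n : ℕ => a n ^ 2) := by
  -- even indices vanish
  have heven' : ∀ q : ℕ, a (2*q+2) = 0 := by
    intro q
    induction q with
    | zero => simpa using h2
    | succ q ih =>
      have hE := hrec (2*q+3) (by omega)
      have e : 2*q+3-1 = 2*q+2 := by omega
      rw [e, ih] at hE
      push_cast at hE
      have hc : ((2*q:ℝ)+3+1) * Real.sqrt ((2*q:ℝ)+3) ≠ 0 := by positivity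
      have h0 : (((2*q:ℝ)+3)+1) * Real.sqrt ((2*q:ℝ)+3) * a (2*q+3+1) = 0 := by linarith
      have h0' := (mul_eq_zero.mp h0).resolve_left hc
      have e2 : 2*(q+1)+2 = 2*q+3+1 := by omega
      rw [e2]; exact h0'
  have heven : ∀ p : ℕ, 1 ≤ p → a (2 * p) = 0 := by
    intro p hp
    obtain ⟨q, rfl⟩ : ∃ q, p = q + 1 := ⟨p-1, by omega⟩
    have := heven' q
    have e : 2*(q+1) = 2*q+2 := by omega
    rw [e]; exact this
  -- key decay estimate for odd indices
  have key : ∀ q : ℕ, a (2*q+3) ^ 2 * Real.sqrt (((q:ℝ)+2)^3) ≤ 1 := by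
    have keyineq : ∀ x : ℝ, 0 ≤ x →
        (2*x+4)^2*(2*x+3) * Real.sqrt ((x+3)^3) ≤ (2*x+5)^2*(2*x+4) * Real.sqrt ((x+2)^3) := by
      intro x hx
      have hA : (0:ℝ) ≤ (2*x+4)^2*(2*x+3) := by positivity
      have hB : (0:ℝ) ≤ (2*x+5)^2*(2*x+4) := by positivity
      rw [show (2*x+4)^2*(2*x+3) * Real.sqrt ((x+3)^3)
          = Real.sqrt (((2*x+4)^2*(2*x+3))^2 * ((x+3)^3)) by
        rw [Real.sqrt_mul (by positivity), Real.sqrt_sq hA],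
        show (2*x+5)^2*(2*x+4) * Real.sqrt ((x+2)^3)
          = Real.sqrt (((2*x+5)^2*(2*x+4))^2 * ((x+2)^3)) by
        rw [Real.sqrt_mul (by positivity), Real.sqrt_sq hB]]
      apply Real.sqrt_le_sqrt
      nlinarith [sq_nonneg x, pow_pos (show (0:ℝ) < x+2 by linarith) 3, sq_nonneg (x+2)]
    intro q
    induction q with
    | zero =>
      have hE := hrec 2 (le_refl 2)
      norm_num at hE
      rw [h1] at hE
      have hs2 : Real.sqrt 2 ^ 2 = 2 := Real.sq_sqrt (by norm_num)
      have ha3 : a 3 ^ 2 ≤ 2/9 := by nlinarith [hE, hs2, Real.sqrt_nonneg 2]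
      have h8 : Real.sqrt ((((0:ℕ):ℝ)+2)^3) ≤ 3 := by
        norm_num
        have h9 : Real.sqrt 8 ≤ Real.sqrt 9 := Real.sqrt_le_sqrt (by norm_num)
        rwa [show (9:ℝ) = 3^2 by norm_num, Real.sqrt_sq (by norm_num)] at h9
      have hnn : 0 ≤ Real.sqrt ((((0:ℕ):ℝ)+2)^3) := Real.sqrt_nonneg _
      have e0 : a (2*0+3) = a 3 := by norm_num
      rw [e0]
      nlinarith [sq_nonneg (a 3)]
    | succ q ih =>
      have hE := hrec (2*q+4) (by omega)
      have e : 2*q+4-1 = 2*q+3 := by omega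
      rw [e] at hE
      push_cast at hE
      set s1 := Real.sqrt ((2*q:ℝ)+4-1) with hs1def
      set s2 := Real.sqrt ((2*q:ℝ)+4) with hs2def
      have hs1 : s1^2 = 2*q+3 := by
        rw [hs1def, show (2*(q:ℝ)+4-1) = 2*q+3 by ring, Real.sq_sqrt (by positivity)]
      have hs2 : s2^2 = 2*q+4 := by
        rw [hs2def]; exact Real.sq_sqrt (by positivity)
      set a3 := a (2*q+3) with ha3def
      set a5 := a (2*q+4+1) with ha5def
      have hsq : ((2*q:ℝ)+5)^2*(2*q+4) * a5^2 = ((2*q:ℝ)+4)^2*(2*q+3) * a3^2 := by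
        linear_combination (((2*q:ℝ)+5)*s2*a5 - ((2*q:ℝ)+4)*s1*a3) * hE
          - ((2*q:ℝ)+5)^2*a5^2 * hs2 + ((2*q:ℝ)+4)^2*a3^2 * hs1
      have K := keyineq (q:ℝ) (by positivity)
      have hpos : (0:ℝ) < ((2*q:ℝ)+5)^2*(2*q+4) := by positivity
      have h2' : ((2*q:ℝ)+5)^2*(2*q+4) * a5^2 * Real.sqrt (((q:ℝ)+3)^3)
          = ((2*q:ℝ)+4)^2*(2*q+3) * a3^2 * Real.sqrt (((q:ℝ)+3)^3) := by rw [hsq]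
      have goal2 : ((2*q:ℝ)+5)^2*(2*q+4) * (a5^2 * Real.sqrt (((q:ℝ)+3)^3))
          ≤ ((2*q:ℝ)+5)^2*(2*q+4) * (a3^2 * Real.sqrt (((q:ℝ)+2)^3)) := by
        have h := mul_le_mul_of_nonneg_left K (sq_nonneg a3)
        nlinarith [h, h2']
      have e2 : 2*(q+1)+3 = 2*q+4+1 := by omega
      rw [e2]
      have e3 : (((q+1:ℕ)):ℝ) + 2 = (q:ℝ)+3 := by push_cast; ring
      rw [e3, ← ha5def]
      exact le_trans (le_of_mul_le_mul_left goal2 hpos) ih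
  -- sqrt of cube as rpow
  have rp : ∀ x : ℝ, 0 < x → Real.sqrt (x^3) = x ^ ((3:ℝ)/2) := by
    intro x hx
    rw [Real.sqrt_eq_rpow, ← Real.rpow_natCast x 3, ← Real.rpow_mul hx.le]
    norm_num
  -- square bound for odd indices, in convenient form
  have keysq : ∀ q : ℕ, a (2*q+3) ^ 2 ≤ (((q:ℝ)+1) ^ ((3:ℝ)/2))⁻¹ := by
    intro q
    have h1' : (0:ℝ) < Real.sqrt (((q:ℝ)+1)^3) := Real.sqrt_pos.mpr (by positivity)
    have hmono : Real.sqrt (((q:ℝ)+1)^3) ≤ Real.sqrt (((q:ℝ)+2)^3) := by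
      apply Real.sqrt_le_sqrt; nlinarith [Nat.cast_nonneg (α := ℝ) q]
    have hb : a (2*q+3) ^ 2 * Real.sqrt (((q:ℝ)+1)^3) ≤ 1 := by
      have := key q
      nlinarith [sq_nonneg (a (2*q+3))]
    rw [← rp ((q:ℝ)+1) (by positivity), ← one_div]
    exact (le_div_iff₀ h1').mpr hb
  -- the pointwise bound |a (2p+1)| ≤ p^{-3/4}
  have hbound : ∀ p : ℕ, 1 ≤ p → |a (2 * p + 1)| ≤ (p : ℝ) ^ (-(3 : ℝ) / 4) := by
    intro p hp
    obtain ⟨q, rfl⟩ : ∃ q, p = q + 1 := ⟨p-1, by omega⟩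
    set x : ℝ := ((q+1 : ℕ) : ℝ) with hxdef
    have hx0 : (0:ℝ) < x := by rw [hxdef]; positivity
    have hx1 : (1:ℝ) ≤ x := by rw [hxdef]; exact_mod_cast Nat.one_le_iff_ne_zero.mpr (by omega)
    have hxq : x = (q:ℝ) + 1 := by rw [hxdef]; push_cast; ring
    have e3 : (x ^ (-(3:ℝ)/4))^2 = (x ^ ((3:ℝ)/2))⁻¹ := by
      rw [← Real.rpow_natCast (x ^ (-(3:ℝ)/4)) 2, ← Real.rpow_mul hx0.le]
      rw [show (-(3:ℝ)/4) * ((2:ℕ):ℝ) = -((3:ℝ)/2) by push_cast; ring]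
      rw [Real.rpow_neg hx0.le]
    have hsqle : a (2*(q+1)+1) ^ 2 ≤ (x ^ (-(3:ℝ)/4))^2 := by
      rw [e3, hxq]
      have e4 : 2*(q+1)+1 = 2*q+3 := by omega
      rw [e4]
      exact keysq q
    calc |a (2*(q+1)+1)| = Real.sqrt (a (2*(q+1)+1) ^ 2) := (Real.sqrt_sq_eq_abs _).symm
      _ ≤ Real.sqrt ((x ^ (-(3:ℝ)/4))^2) := Real.sqrt_le_sqrt hsqle
      _ = x ^ (-(3:ℝ)/4) := Real.sqrt_sq (Real.rpow_nonneg hx0.le _)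
  refine ⟨heven, ⟨1, one_pos, ?_⟩, ?_⟩
  · intro p hp
    rw [one_mul]
    exact hbound p hp
  -- square-summability
  · apply Summable.even_add_odd
    · -- even part: supported on k = 0
      apply summable_of_ne_finset_zero (s := {0})
      intro k hk
      have hk1 : 1 ≤ k := by simpa [Nat.one_le_iff_ne_zero] using hk
      simp [heven k hk1]
    · -- odd part
      refine (summable_nat_add_iff 1).mp ?_
      have hg : Summable (fun n : ℕ => (((n:ℝ)+1) ^ ((3:ℝ)/2))⁻¹) := by
        have h0 : Summable (fun n : ℕ => 1 / (n:ℝ) ^ ((3:ℝ)/2)) :=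
          (Real.summable_one_div_nat_rpow).mpr (by norm_num)
        have h1' := (summable_nat_add_iff 1).mpr h0
        apply h1'.congr
        intro n
        push_cast
        rw [one_div]
      apply Summable.of_nonneg_of_le (fun n => sq_nonneg _) _ hg
      intro n
      have e4 : 2*(n+1)+1 = 2*n+3 := by omega
      rw [e4]
      exact keysq n
end
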